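/- If e₁,…,eₘ ∈ {0,…,d-1} and a₁,…,aₘ ∈ (-1,1) are reals, and δ₁,…,δₘ are reals with |δᵢ| ≤ 1/2^k where 2^k > 4d²m², then |∏ᵢ(aᵢ+δᵢ)^{eᵢ} − ∏ᵢ aᵢ^{eᵢ}| ≤ 4dm/2^k. -/
import Mathlib

/-- Telescoping bound: product difference is bounded by card · c · B^card. -/
lemma abs_prod_sub_prod_le {ι : Type*} [DecidableEq ι] (s : Finset ι) (x y : ι → ℝ)
    (B c : ℝ) (hB : 1 ≤ B)
    (hx : ∀ i ∈ s, |x i| ≤ B) (hy : ∀ i ∈ s, |y i| ≤ B)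
    (hc : ∀ i ∈ s, |x i - y i| ≤ c) :
    |(∏ i ∈ s, x i) - ∏ i ∈ s, y i| ≤ s.card * c * B ^ s.card := by
  induction s using Finset.induction with
  | empty => simp
  | @insert i s hi ih =>
    have hxi : |x i| ≤ B := hx i (Finset.mem_insert_self i s)
    have hci : |x i - y i| ≤ c := hc i (Finset.mem_insert_self i s)
    have hc0 : 0 ≤ c := le_trans (abs_nonneg _) hci
    have hB0 : (0:ℝ) ≤ B := le_trans zero_le_one hB
    have hP : |(∏ j ∈ s, x j) - ∏ j ∈ s, y j| ≤ s.card * c * B ^ s.card :=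
      ih (fun j hj => hx j (Finset.mem_insert_of_mem hj))
        (fun j hj => hy j (Finset.mem_insert_of_mem hj))
        (fun j hj => hc j (Finset.mem_insert_of_mem hj))
    have hQ : |∏ j ∈ s, y j| ≤ B ^ s.card := by
      rw [Finset.abs_prod]
      calc ∏ j ∈ s, |y j| ≤ ∏ _j ∈ s, B :=
            Finset.prod_le_prod (fun j _ => abs_nonneg _)
              (fun j hj => hy j (Finset.mem_insert_of_mem hj))
        _ = B ^ s.card := Finset.prod_const B
    rw [Finset.prod_insert hi, Finset.prod_insert hi, Finset.card_insert_of_notMem hi]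
    have key : x i * ∏ j ∈ s, x j - y i * ∏ j ∈ s, y j
        = x i * ((∏ j ∈ s, x j) - ∏ j ∈ s, y j) + (x i - y i) * ∏ j ∈ s, y j := by ring
    rw [key]
    have t1 : |x i| * |(∏ j ∈ s, x j) - ∏ j ∈ s, y j| ≤ B * (s.card * c * B ^ s.card) :=
      mul_le_mul hxi hP (abs_nonneg _) hB0
    have t2 : |x i - y i| * |∏ j ∈ s, y j| ≤ c * B ^ s.card :=
      mul_le_mul hci hQ (abs_nonneg _) hc0
    have h1 : B ^ s.card ≤ B ^ (s.card + 1) := pow_le_pow_right₀ hB (Nat.le_succ _)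
    calc |x i * ((∏ j ∈ s, x j) - ∏ j ∈ s, y j) + (x i - y i) * ∏ j ∈ s, y j|
        ≤ |x i * ((∏ j ∈ s, x j) - ∏ j ∈ s, y j)| + |(x i - y i) * ∏ j ∈ s, y j| :=
          abs_add_le _ _
      _ = |x i| * |(∏ j ∈ s, x j) - ∏ j ∈ s, y j| + |x i - y i| * |∏ j ∈ s, y j| := by
          rw [abs_mul, abs_mul]
      _ ≤ B * (s.card * c * B ^ s.card) + c * B ^ s.card := add_le_add t1 t2
      _ = s.card * c * B ^ (s.card + 1) + c * B ^ s.card := by rw [pow_succ]; ring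
      _ ≤ s.card * c * B ^ (s.card + 1) + c * B ^ (s.card + 1) := by
          have := mul_le_mul_of_nonneg_left h1 hc0
          linarith
      _ = (↑(s.card + 1)) * c * B ^ (s.card + 1) := by push_cast; ring

lemma abs_pow_sub_pow_le' (x y B : ℝ) (n : ℕ) (hB : 1 ≤ B)
    (hx : |x| ≤ B) (hy : |y| ≤ B) :
    |x ^ n - y ^ n| ≤ n * |x - y| * B ^ n := by
  have := abs_prod_sub_prod_le (Finset.univ : Finset (Fin n)) (fun _ => x) (fun _ => y)
    B |x - y| hB (fun _ _ => hx) (fun _ _ => hy) (fun _ _ => le_refl _)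
  simpa using this

set_option maxHeartbeats 1000000 in
/-- Error due to rounding points: if `eᵢ < d`, `aᵢ ∈ (-1,1)`, `|δᵢ| ≤ 1/2^k`
and `2^k > 4d²m²`, then `|∏ᵢ (aᵢ+δᵢ)^{eᵢ} − ∏ᵢ aᵢ^{eᵢ}| ≤ 4dm/2^k`. -/
theorem error_rounding_points (d m k : ℕ) (hd : 0 < d) (hm : 0 < m) (hk : 0 < k)
    (hbig : (4 : ℝ) * (d : ℝ) ^ 2 * (m : ℝ) ^ 2 < 2 ^ k)
    (e : Fin m → ℕ) (he : ∀ i, e i < d)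
    (a δ : Fin m → ℝ) (ha : ∀ i, |a i| < 1) (hδ : ∀ i, |δ i| ≤ 1 / 2 ^ k) :
    |(∏ i, (a i + δ i) ^ e i) - ∏ i, (a i) ^ e i| ≤ 4 * (d : ℝ) * (m : ℝ) / 2 ^ k := by
  set ε : ℝ := 1 / 2 ^ k with hε
  have hε0 : 0 < ε := by positivity
  have hd1 : (1:ℝ) ≤ d := by exact_mod_cast hd
  have hm1 : (1:ℝ) ≤ m := by exact_mod_cast hm
  have hdm : (1:ℝ) ≤ (d:ℝ) * m := by nlinarith
  have hεhalf : ε ≤ 1 / 2 := by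
    rw [hε]
    have h2 : (2:ℝ) = 2 ^ 1 := by norm_num
    have : (2:ℝ) ^ 1 ≤ 2 ^ k := pow_le_pow_right₀ one_le_two hk
    rw [div_le_div_iff₀ (by positivity) (by norm_num)]
    nlinarith
  have hεsmall : ε * (4 * d ^ 2 * m ^ 2) < 1 := by
    rw [hε, div_mul_eq_mul_div, one_mul, div_lt_one (by positivity)]
    exact hbig
  set B : ℝ := 1 + ε with hB
  have hB1 : (1:ℝ) ≤ B := by rw [hB]; linarith
  have hNe : (↑(d * (m + 1)) : ℝ) * ε ≤ 1 / 2 := by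
    have h1 : (↑(d * (m + 1)) : ℝ) ≤ 2 * d * m := by push_cast; nlinarith
    have h2 : (2 * (d:ℝ) * m) * ε ≤ 1 / 2 := by
      nlinarith [mul_nonneg hε0.le
        (mul_nonneg (sub_nonneg.mpr hdm) (by positivity : (0:ℝ) ≤ (d:ℝ) * m))]
    nlinarith
  have hBN : B ^ (d * (m + 1)) ≤ 2 := by
    set N := d * (m + 1) with hN
    have hbern : 1 - (N:ℝ) * ε ≤ (1 - ε) ^ N := by
      have := one_add_mul_le_pow (a := -ε) (by linarith : (-2:ℝ) ≤ -ε) N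
      simpa [sub_eq_add_neg, mul_comm] using this
    have hpos : (0:ℝ) ≤ (1 - ε) ^ N := pow_nonneg (by linarith) N
    have hprod : B ^ N * (1 - ε) ^ N ≤ 1 := by
      rw [← mul_pow]
      have hh : B * (1 - ε) = 1 - ε ^ 2 := by rw [hB]; ring
      rw [hh]
      apply pow_le_one₀ <;> nlinarith
    have h12 : (1:ℝ) / 2 ≤ (1 - ε) ^ N := by linarith
    have hBN0 : (0:ℝ) ≤ B ^ N := pow_nonneg (by linarith) N
    nlinarith [mul_le_mul_of_nonneg_left h12 hBN0]
  set c : ℝ := d * ε * B ^ d with hc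
  have hmain := abs_prod_sub_prod_le (Finset.univ : Finset (Fin m))
    (fun i => (a i + δ i) ^ e i) (fun i => (a i) ^ e i) (B ^ d) c
    (one_le_pow₀ hB1)
    (fun i _ => by
      rw [abs_pow]
      calc |a i + δ i| ^ e i ≤ B ^ e i := by
            apply pow_le_pow_left₀ (abs_nonneg _)
            calc |a i + δ i| ≤ |a i| + |δ i| := abs_add_le _ _
              _ ≤ 1 + ε := by have := ha i; have := hδ i; linarith
        _ ≤ B ^ d := pow_le_pow_right₀ hB1 (he i).le)
    (fun i _ => by
      rw [abs_pow]
      calc |a i| ^ e i ≤ 1 ^ e i := pow_le_pow_left₀ (abs_nonneg _) (ha i).le _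
        _ = 1 := one_pow _
        _ ≤ B ^ d := one_le_pow₀ hB1)
    (fun i _ => by
      have hxB : |a i + δ i| ≤ B := by
        calc |a i + δ i| ≤ |a i| + |δ i| := abs_add_le _ _
          _ ≤ 1 + ε := by have := ha i; have := hδ i; linarith
      have hyB : |a i| ≤ B := le_trans (ha i).le (by linarith)
      calc |(a i + δ i) ^ e i - (a i) ^ e i|
          ≤ (e i) * |(a i + δ i) - a i| * B ^ e i :=
            abs_pow_sub_pow_le' _ _ B (e i) hB1 hxB hyB
        _ ≤ d * ε * B ^ d := by
            have h1 : |(a i + δ i) - a i| ≤ ε := by simpa using hδ i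
            have h2 : (e i : ℝ) ≤ d := by exact_mod_cast (he i).le
            have h3 : B ^ e i ≤ B ^ d := pow_le_pow_right₀ hB1 (he i).le
            have h6 : (0:ℝ) ≤ B ^ e i := pow_nonneg (by linarith) _
            exact mul_le_mul
              (mul_le_mul h2 h1 (abs_nonneg _) (by linarith))
              h3 h6 (by positivity))
  simp only [Finset.card_univ, Fintype.card_fin] at hmain
  have heq : (m:ℝ) * c * (B ^ d) ^ m = (d:ℝ) * m * ε * B ^ (d * (m+1)) := by
    rw [hc, ← pow_mul]
    have hdd : d * (m + 1) = d + d * m := by ring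
    rw [hdd, pow_add]
    ring
  have h2k : (0:ℝ) < 2 ^ k := by positivity
  calc |(∏ i, (a i + δ i) ^ e i) - ∏ i, (a i) ^ e i|
      ≤ (m:ℝ) * c * (B ^ d) ^ m := hmain
    _ = (d:ℝ) * m * ε * B ^ (d * (m+1)) := heq
    _ ≤ (d:ℝ) * m * ε * 2 := by
        have hdmε : (0:ℝ) ≤ (d:ℝ) * m * ε := by positivity
        nlinarith
    _ ≤ 4 * (d : ℝ) * (m : ℝ) / 2 ^ k := by
        rw [hε]
        have hq : (d:ℝ) * m * (1 / 2 ^ k) * 2 = 2 * ((d:ℝ) * m) / 2 ^ k := by ring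
        rw [hq, div_le_div_iff₀ h2k h2k]
        nlinarith [mul_nonneg (by positivity : (0:ℝ) ≤ (d:ℝ) * m) h2k.le]
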